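/- arXiv:2504.14567 — 2 statements merged into one kernel-verified Lean document; each statement's English description precedes it below -/
import Mathlib

section
/- Let n ≥ 2 and let S be a subset of ℝⁿ (Euclidean n-space) that is bounded, connected, and contains at least two distinct points. Then the frontier (topological boundary) of S is uncountable. -/
open Set Metric

/-- A preconnected set in a metric space containing two distinct points is uncountable. -/
lemma aux_uncountable_of_preconnected {X : Type*} [MetricSpace X] {T : Set X}
    (hT : IsPreconnected T) {x y : X} (hx : x ∈ T) (hy : y ∈ T) (hxy : x ≠ y) :
    ¬ T.Countable := by
  intro hc
  have hcont : Continuous (fun z : X => dist x z) := continuous_const.dist continuous_id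
  have himg : IsPreconnected ((fun z : X => dist x z) '' T) :=
    hT.image _ hcont.continuousOn
  have h0 : (0 : ℝ) ∈ (fun z : X => dist x z) '' T := ⟨x, hx, by simp⟩
  have hd : dist x y ∈ (fun z : X => dist x z) '' T := ⟨y, hy, rfl⟩
  have hIcc : Icc (0 : ℝ) (dist x y) ⊆ (fun z : X => dist x z) '' T :=
    himg.ordConnected.out h0 hd
  have hImgC : ((fun z : X => dist x z) '' T).Countable := hc.image _
  have hIccC : (Icc (0 : ℝ) (dist x y)).Countable := hImgC.mono hIcc
  have hlt : (0 : ℝ) < dist x y := dist_pos.mpr hxy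
  have := Cardinal.mk_Icc_real hlt
  have hle : (Cardinal.mk (Icc (0 : ℝ) (dist x y))) ≤ Cardinal.aleph0 := by
    have := hIccC.to_subtype
    exact Cardinal.mk_le_aleph0
  rw [this] at hle
  exact absurd (lt_of_lt_of_le Cardinal.aleph0_lt_continuum hle) (lt_irrefl _)

/-- A preconnected set meeting the interior of `S` and the complement of its closure
meets the frontier of `S`. -/
lemma aux_frontier_meet {X : Type*} [TopologicalSpace X] {T S : Set X}
    (hT : IsPreconnected T) {p q : X} (hp : p ∈ T) (hpi : p ∈ interior S)
    (hq : q ∈ T) (hqc : q ∉ closure S) : (T ∩ frontier S).Nonempty := by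
  by_contra h
  rw [Set.not_nonempty_iff_eq_empty] at h
  have hsub : T ⊆ interior S ∪ (closure S)ᶜ := by
    intro z hz
    by_cases hz1 : z ∈ closure S
    · by_cases hz2 : z ∈ interior S
      · exact Or.inl hz2
      · exfalso
        have hzf : z ∈ frontier S := by
          rw [frontier]
          exact ⟨hz1, hz2⟩
        have hmem : z ∈ T ∩ frontier S := ⟨hz, hzf⟩
        rw [h] at hmem
        exact hmem
    · exact Or.inr hz1
  have h1 : (T ∩ interior S).Nonempty := ⟨p, hp, hpi⟩
  have h2 : (T ∩ (closure S)ᶜ).Nonempty := ⟨q, hq, hqc⟩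
  obtain ⟨z, hzT, hz1, hz2⟩ := hT (interior S) (closure S)ᶜ isOpen_interior
    isClosed_closure.isOpen_compl hsub h1 h2
  exact hz2 (subset_closure (interior_subset hz1))

/-- In Euclidean `n`-space with `n ≥ 2`, the frontier of a bounded connected
set containing at least two distinct points is uncountable. -/
theorem frontier_uncountable_of_bounded_connected
    (n : ℕ) (hn : 2 ≤ n) (S : Set (EuclideanSpace ℝ (Fin n)))
    (hbdd : Bornology.IsBounded S) (hconn : IsConnected S)
    (hpts : ∃ x ∈ S, ∃ y ∈ S, x ≠ y) :
    ¬ (frontier S).Countable := by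
  intro hc
  by_cases hint : interior S = ∅
  · -- empty interior: S ⊆ frontier S, and S is uncountable
    obtain ⟨x, hx, y, hy, hxy⟩ := hpts
    have hSsub : S ⊆ frontier S := by
      intro z hz
      exact ⟨subset_closure hz, by rw [hint]; exact notMem_empty z⟩
    exact aux_uncountable_of_preconnected hconn.isPreconnected hx hy hxy (hc.mono hSsub)
  · -- nonempty interior: project frontier points onto the unit sphere
    obtain ⟨x, hx⟩ := Set.nonempty_iff_ne_empty.mpr hint
    obtain ⟨R, hR, hball⟩ := hbdd.closure.subset_ball_lt 0 x
    -- every unit direction gives a frontier point on the segment from x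
    have key : ∀ v ∈ sphere (0 : EuclideanSpace ℝ (Fin n)) 1, ∃ z ∈ frontier S, z ∈ segment ℝ x (x + R • v) := by
      intro v hv
      have hvnorm : ‖v‖ = 1 := by simpa using hv
      have hqc : x + R • v ∉ closure S := by
        intro hmem
        have := hball hmem
        rw [mem_ball, dist_eq_norm] at this
        have : ‖R • v‖ < R := by simpa using this
        rw [norm_smul, hvnorm, mul_one, Real.norm_eq_abs, abs_of_pos hR] at this
        exact lt_irrefl _ this
      have hseg : IsPreconnected (segment ℝ x (x + R • v)) :=
        (convex_segment x (x + R • v)).isPreconnected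
      obtain ⟨z, hz1, hz2⟩ := aux_frontier_meet hseg (left_mem_segment ℝ x (x + R • v)) hx
        (right_mem_segment ℝ x (x + R • v)) hqc
      exact ⟨z, hz2, hz1⟩
    choose! g hg1 hg2 using key
    -- g is injective on the sphere
    have hgne : ∀ v ∈ sphere (0 : EuclideanSpace ℝ (Fin n)) 1, g v ≠ x := by
      intro v hv heq
      exact (hg1 v hv).2 (heq ▸ hx)
    have hrep : ∀ v ∈ sphere (0 : EuclideanSpace ℝ (Fin n)) 1, v = ‖g v - x‖⁻¹ • (g v - x) := by
      intro v hv
      have hvnorm : ‖v‖ = 1 := mem_sphere_zero_iff_norm.mp hv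
      obtain ⟨a, b, ha, hb, hab, heq⟩ := hg2 v hv
      have ha' : a = 1 - b := by linarith
      have hgx : g v - x = (b * R) • v := by
        rw [← heq, ha']; module
      have hbne : b ≠ 0 := by
        intro hb0
        apply hgne v hv
        have : g v - x = 0 := by rw [hgx, hb0, zero_mul, zero_smul]
        have := sub_eq_zero.mp this
        exact this
      have hbR : 0 < b * R := mul_pos (lt_of_le_of_ne hb (Ne.symm hbne)) hR
      have hnorm : ‖g v - x‖ = b * R := by
        rw [hgx, norm_smul, hvnorm, mul_one, Real.norm_eq_abs, abs_of_pos hbR]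
      rw [hnorm, hgx, smul_smul, inv_mul_cancel₀ hbR.ne', one_smul]
    have hinj : Set.InjOn g (sphere (0 : EuclideanSpace ℝ (Fin n)) 1) := by
      intro v hv w hw heq
      rw [hrep v hv, hrep w hw, heq]
    have hmaps : Set.MapsTo g (sphere (0 : EuclideanSpace ℝ (Fin n)) 1) (frontier S) := fun v hv => hg1 v hv
    have hsc : (sphere (0 : EuclideanSpace ℝ (Fin n)) 1).Countable := hmaps.countable_of_injOn hinj hc
    -- but the unit sphere is uncountable
    have hrank : 1 < Module.rank ℝ (EuclideanSpace ℝ (Fin n)) := by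
      rw [← Module.finrank_eq_rank]
      have : Module.finrank ℝ (EuclideanSpace ℝ (Fin n)) = n := finrank_euclideanSpace_fin
      rw [this]
      exact_mod_cast (by omega : 1 < n)
    have hconnS : IsConnected (sphere (0 : EuclideanSpace ℝ (Fin n)) 1) := isConnected_sphere hrank 0 zero_le_one
    set v₀ : EuclideanSpace ℝ (Fin n) := EuclideanSpace.single (⟨0, by omega⟩ : Fin n) (1 : ℝ) with hv₀def
    have hv₀norm : ‖v₀‖ = 1 := by
      rw [hv₀def, EuclideanSpace.norm_single]
      norm_num
    have hv₀mem : v₀ ∈ sphere (0 : EuclideanSpace ℝ (Fin n)) 1 := mem_sphere_zero_iff_norm.mpr hv₀norm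
    have hv₀mem' : -v₀ ∈ sphere (0 : EuclideanSpace ℝ (Fin n)) 1 := by
      rw [mem_sphere_zero_iff_norm, norm_neg]
      exact hv₀norm
    have hv₀ne : v₀ ≠ -v₀ := by
      intro h
      have h2 : v₀ + v₀ = 0 := by rw [eq_neg_iff_add_eq_zero] at h; exact h
      have h3 : (2 : ℝ) • v₀ = 0 := by rw [two_smul]; exact h2
      have h4 : v₀ = 0 := by
        rcases smul_eq_zero.mp h3 with h | h
        · norm_num at h
        · exact h
      rw [h4, norm_zero] at hv₀norm
      norm_num at hv₀norm
    exact aux_uncountable_of_preconnected hconnS.isPreconnected hv₀mem hv₀mem' hv₀ne hsc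
end

section
/- Let X be a topological space, let σ : X → X be a continuous involution (σ ∘ σ = id), let n be a positive integer, and let S^n denote the unit sphere centered at the origin in ℝ^{n+1}. Suppose f : X → S^n is a continuous map such that f(x) ≠ −f(σ(x)) for every x ∈ X. Then f is homotopic to a continuous map g : X → S^n satisfying g(σ(x)) = g(x) for all x ∈ X. -/
/-- Let `σ : X → X` be a continuous involution of a topological space `X`,
`n ≥ 1`, and `f : X → Sⁿ` a continuous map into the unit sphere of `ℝ^{n+1}` such that
`f x` is never the antipode of `f (σ x)`. Then `f` is homotopic to a continuous map `g`
with `g (σ x) = g x` for all `x`. -/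
theorem homotopic_to_invariant_of_nowhere_antipodal
    (X : Type*) [TopologicalSpace X]
    (σ : X → X) (hσ_cont : Continuous σ) (hσ_inv : σ ∘ σ = id)
    (n : ℕ) (hn : 0 < n)
    (f : C(X, Metric.sphere (0 : EuclideanSpace ℝ (Fin (n + 1))) 1))
    (hf : ∀ x : X, (f x : EuclideanSpace ℝ (Fin (n + 1))) ≠ -(f (σ x) : EuclideanSpace ℝ (Fin (n + 1)))) :
    ∃ g : C(X, Metric.sphere (0 : EuclideanSpace ℝ (Fin (n + 1))) 1),
      ContinuousMap.Homotopic f g ∧ ∀ x : X, g (σ x) = g x := by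
  set E := EuclideanSpace ℝ (Fin (n + 1)) with hE
  have hnorm : ∀ x : X, ‖(f x : E)‖ = 1 := by
    intro x
    have := (f x).2
    simpa [mem_sphere_iff_norm] using this
  -- the straight-line path, before normalization
  set v : ℝ → X → E := fun t x => (2 - t) • (f x : E) + t • (f (σ x) : E) with hv
  have key : ∀ t : ℝ, t ∈ Set.Icc (0 : ℝ) 1 → ∀ x : X, v t x ≠ 0 := by
    intro t ht x h0
    have heq : (2 - t) • (f x : E) = -(t • (f (σ x) : E)) :=
      eq_neg_of_add_eq_zero_left h0
    have hnorms : ‖(2 - t) • (f x : E)‖ = ‖t • (f (σ x) : E)‖ := by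
      rw [heq, norm_neg]
    rw [norm_smul, norm_smul, hnorm, hnorm, mul_one, mul_one,
      Real.norm_eq_abs, Real.norm_eq_abs, abs_of_nonneg ht.1,
      abs_of_nonneg (by linarith [ht.2] : (0:ℝ) ≤ 2 - t)] at hnorms
    have ht1 : t = 1 := by linarith
    subst ht1
    have h0' : (f x : E) + (f (σ x) : E) = 0 := by
      have : v 1 x = (f x : E) + (f (σ x) : E) := by
        have h21 : (2:ℝ) - 1 = 1 := by norm_num
        simp [hv, h21]
      rw [this] at h0; exact h0
    exact hf x (eq_neg_of_add_eq_zero_left h0')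
  have hvcont : Continuous fun p : ℝ × X => v p.1 p.2 := by
    apply Continuous.add
    · exact ((continuous_const.sub continuous_fst).smul
        ((continuous_subtype_val.comp f.continuous).comp continuous_snd))
    · exact (continuous_fst.smul
        ((continuous_subtype_val.comp (f.continuous.comp hσ_cont)).comp continuous_snd))
  -- membership in the sphere after normalization
  have memS : ∀ (t : ℝ), t ∈ Set.Icc (0:ℝ) 1 → ∀ x : X,
      ‖v t x‖⁻¹ • v t x ∈ Metric.sphere (0 : E) 1 := by
    intro t ht x
    rw [mem_sphere_zero_iff_norm]
    exact norm_smul_inv_norm (key t ht x)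
  -- the invariant map g
  have memg : ∀ x : X, ‖v 1 x‖⁻¹ • v 1 x ∈ Metric.sphere (0 : E) 1 :=
    fun x => memS 1 ⟨zero_le_one, le_refl 1⟩ x
  set g : C(X, Metric.sphere (0 : E) 1) :=
    ⟨fun x => ⟨‖v 1 x‖⁻¹ • v 1 x, memg x⟩, by
      apply Continuous.subtype_mk
      have hc : Continuous fun x : X => v 1 x :=
        hvcont.comp (continuous_const.prodMk continuous_id)
      exact ((continuous_norm.comp hc).inv₀
        (fun x => norm_ne_zero_iff.mpr (key 1 ⟨zero_le_one, le_refl 1⟩ x))).smul hc⟩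
    with hg
  refine ⟨g, ⟨?_⟩, ?_⟩
  · -- the homotopy
    refine
      { toFun := fun p => ⟨‖v (p.1 : ℝ) p.2‖⁻¹ • v (p.1 : ℝ) p.2,
          memS (p.1 : ℝ) p.1.2 p.2⟩
        continuous_toFun := ?_
        map_zero_left := ?_
        map_one_left := ?_ }
    · apply Continuous.subtype_mk
      have hc : Continuous fun p : unitInterval × X => v (p.1 : ℝ) p.2 :=
        hvcont.comp ((continuous_subtype_val.comp continuous_fst).prodMk continuous_snd)
      exact ((continuous_norm.comp hc).inv₀
        (fun p => norm_ne_zero_iff.mpr (key _ p.1.2 p.2))).smul hc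
    · intro x
      apply Subtype.ext
      have h2 : v (0 : ℝ) x = (2 : ℝ) • (f x : E) := by simp [hv]
      show ‖v (0:ℝ) x‖⁻¹ • v (0:ℝ) x = (f x : E)
      rw [h2, norm_smul, hnorm, smul_smul]
      norm_num
    · intro x
      apply Subtype.ext
      rfl
  · intro x
    apply Subtype.ext
    have hfix : σ (σ x) = x := congrFun hσ_inv x
    show ‖v 1 (σ x)‖⁻¹ • v 1 (σ x) = ‖v 1 x‖⁻¹ • v 1 x
    have : v 1 (σ x) = v 1 x := by
      have h21 : (2:ℝ) - 1 = 1 := by norm_num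
      simp [hv, hfix, h21, add_comm]
    rw [this]
end
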